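/- Let G be a starlike graph with clique partition (V_0, V_1, …, V_t), let i ∈ {0, 1, …, t}, and let T_i be a critical independent set of G_i contained in Y_i. Then the set S_i = (C'_i − N(T_i)) ∪ T_i ∪ C_i is an m-convexly independent set of G and |S_i| = |X_i| + d_c(G_i). Consequently r(G) ≥ |X_i| + d_c(G_i). -/

import Mathlib

open SimpleGraph

variable {V : Type*}

/-- The closed neighborhood of a vertex. -/
def closedNbhd (G : SimpleGraph V) (v : V) : Set V := insert v (G.neighborSet v)

/-- A vertex is simplicial if its closed neighborhood induces a complete graph. -/
def IsSimplicial (G : SimpleGraph V) (v : V) : Prop :=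
  ∀ a ∈ closedNbhd G v, ∀ b ∈ closedNbhd G v, a ≠ b → G.Adj a b

/-- `Z`, the set of simplicial vertices of `G`. -/
def simplicialSet (G : SimpleGraph V) : Set V := {v | IsSimplicial G v}

/-- `N(T)`, the union of open neighborhoods of vertices of `T`. -/
def nbhdSet (G : SimpleGraph V) (T : Set V) : Set V := ⋃ v ∈ T, G.neighborSet v

/-- An independent set of vertices. -/
def IsIndepSet' (G : SimpleGraph V) (T : Set V) : Prop :=
  ∀ u ∈ T, ∀ v ∈ T, ¬ G.Adj u v

/-- The difference `d(T) = |T| - |N(T)|` of a set of vertices. -/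
noncomputable def indepDiff (G : SimpleGraph V) (T : Set V) : ℤ :=
  (T.ncard : ℤ) - ((nbhdSet G T).ncard : ℤ)

/-- The critical independence difference `d_c(G)`. -/
noncomputable def critIndepDiff (G : SimpleGraph V) : ℤ :=
  sSup {d : ℤ | ∃ T : Set V, IsIndepSet' G T ∧ d = indepDiff G T}

/-- A walk is an induced path if it is a path and no two non-consecutive vertices
of it are adjacent. -/
def IsInducedPath (G : SimpleGraph V) {a b : V} (p : G.Walk a b) : Prop :=
  p.IsPath ∧ ∀ (i j : ℕ) (hi : i < p.support.length) (hj : j < p.support.length),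
    i + 1 < j → ¬ G.Adj (p.support.get ⟨i, hi⟩) (p.support.get ⟨j, hj⟩)

/-- A set is monophonically convex if it contains every vertex of every induced path
joining two of its vertices. -/
def MonoConvex (G : SimpleGraph V) (S : Set V) : Prop :=
  ∀ ⦃a b : V⦄, a ∈ S → b ∈ S → ∀ p : G.Walk a b, IsInducedPath G p →
    ∀ w ∈ p.support, w ∈ S

/-- The monophonic convex hull of `S`: the smallest monophonically convex set containing `S`. -/
def monoHull (G : SimpleGraph V) (S : Set V) : Set V :=
  ⋂₀ {T : Set V | S ⊆ T ∧ MonoConvex G T}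

/-- A set is monophonically convexly independent if no member is in the hull
of the others. -/
def MConvexIndep (G : SimpleGraph V) (S : Set V) : Prop :=
  ∀ v ∈ S, v ∉ monoHull G (S \ {v})

/-- The monophonic rank: the largest size of an m-convexly independent set. -/
noncomputable def monoRank (G : SimpleGraph V) : ℕ :=
  sSup {n : ℕ | ∃ S : Set V, MConvexIndep G S ∧ n = S.ncard}

/-- A starlike partition of a graph: a partition of the vertex set into cliques
`V_0, V_1, …, V_t` such that `V_0` is a maximal clique and, for `i ≥ 1`,
all vertices of `V_i` have the same closed neighborhood outside `V_i`,
contained in `V_0`. -/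
structure IsStarlikePartition (G : SimpleGraph V) (t : ℕ) (Vp : Fin (t+1) → Set V) : Prop where
  nonempty : ∀ i, (Vp i).Nonempty
  disjoint : ∀ i j, i ≠ j → Disjoint (Vp i) (Vp j)
  covers : ∀ v : V, ∃ i, v ∈ Vp i
  cliques : ∀ i, G.IsClique (Vp i)
  maximal : ∀ T : Set V, G.IsClique T → Vp 0 ⊆ T → T ⊆ Vp 0
  nbhd_eq : ∀ i : Fin (t+1), i ≠ 0 → ∀ u ∈ Vp i, ∀ v ∈ Vp i,
    closedNbhd G u \ Vp i = closedNbhd G v \ Vp i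
  nbhd_sub : ∀ i : Fin (t+1), i ≠ 0 → ∀ u ∈ Vp i, closedNbhd G u \ Vp i ⊆ Vp 0

/-- `X_i`: the maximal clique containing `V_i` (`X_0 = V_0`; for `i ≥ 1` it is
the closed neighborhood of any vertex of `V_i`). -/
def Xset (G : SimpleGraph V) {t : ℕ} (Vp : Fin (t+1) → Set V) (i : Fin (t+1)) : Set V :=
  if i = 0 then Vp 0 else ⋃ u ∈ Vp i, closedNbhd G u

/-- `C_i = X_i ∩ Z`. -/
def Cset (G : SimpleGraph V) {t : ℕ} (Vp : Fin (t+1) → Set V) (i : Fin (t+1)) : Set V :=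
  Xset G Vp i ∩ simplicialSet G

/-- `C'_i = X_i − C_i`. -/
def Cset' (G : SimpleGraph V) {t : ℕ} (Vp : Fin (t+1) → Set V) (i : Fin (t+1)) : Set V :=
  Xset G Vp i \ Cset G Vp i

/-- `Y_i`: the union of the sets `C_j`, over `j ≠ i` with `C'_j ⊆ C'_i`. -/
def Yset (G : SimpleGraph V) {t : ℕ} (Vp : Fin (t+1) → Set V) (i : Fin (t+1)) : Set V :=
  ⋃ j ∈ {j : Fin (t+1) | j ≠ i ∧ Cset' G Vp j ⊆ Cset' G Vp i}, Cset G Vp j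

open scoped Classical in
/-- The vertex set of the split graph `G_i`: if `|N(Y_i) − Y_i| = |C'_i| − 1` and
`|Y_i| ≥ |C'_i| − 1` then `(C'_i − {x}) ∪ Y_i` where `{x} = C'_i − N(Y_i)`
(so that `C'_i − {x} = C'_i ∩ N(Y_i)`), otherwise `C'_i ∪ Y_i`. -/
noncomputable def Wset (G : SimpleGraph V) {t : ℕ} (Vp : Fin (t+1) → Set V)
    (i : Fin (t+1)) : Set V :=
  if (((nbhdSet G (Yset G Vp i) \ Yset G Vp i).ncard : ℤ) = ((Cset' G Vp i).ncard : ℤ) - 1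
      ∧ ((Yset G Vp i).ncard : ℤ) ≥ ((Cset' G Vp i).ncard : ℤ) - 1)
  then (Cset' G Vp i ∩ nbhdSet G (Yset G Vp i)) ∪ Yset G Vp i
  else Cset' G Vp i ∪ Yset G Vp i

/-- The induced subgraph on `W` with all edges inside `Y` deleted. -/
def inducedMinusY (G : SimpleGraph V) (W Y : Set V) : SimpleGraph ↥W where
  Adj a b := G.Adj a b ∧ ¬((a : V) ∈ Y ∧ (b : V) ∈ Y)
  symm := by
    constructor
    intro a b h
    exact ⟨h.1.symm, fun hc => h.2 ⟨hc.2, hc.1⟩⟩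
  loopless := by
    constructor
    intro a h
    exact G.ne_of_adj h.1 rfl

/-- The split graph `G_i = G[W_i] − E(G[Y_i])`. -/
noncomputable def Gsplit (G : SimpleGraph V) {t : ℕ} (Vp : Fin (t+1) → Set V)
    (i : Fin (t+1)) : SimpleGraph ↥(Wset G Vp i) :=
  inducedMinusY G (Wset G Vp i) (Yset G Vp i)

/-!
Interior vertices of an induced path are never simplicial. In a starlike graph every
non-simplicial vertex lies in the clique `V_0`, so an induced path has length at most three and
each of its interior vertices is adjacent to a simplicial end. Hence for simplicial `v ∈ S_i`
the vertices of `S_i − {v}` together with all non-simplicial vertices form an m-convex set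
avoiding `v`, and for `v ∈ C'_i − N(T_i)` so does `T_i ∪ (X_i − {v})`: an interior vertex of an
induced path between two of its vertices is adjacent to a simplicial end lying in some `C_m`
with `C'_m ⊆ C'_i`, hence lies in `C'_i`, and it is not `v`, since both path-neighbours of `v`
would lie in the clique `X_i`. The count comes from `N_{G_i}(T_i) = C'_i ∩ N(T_i)`, which gives
`|S_i| = |X_i| + d(T_i)`.
-/

section Basic

variable {G : SimpleGraph V}

theorem isSimplicial_iff_isClique {v : V} :
    IsSimplicial G v ↔ G.IsClique (closedNbhd G v) :=
  ⟨fun h _ ha _ hb => h _ ha _ hb, fun h _ ha _ hb => h ha hb⟩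

theorem mem_closedNbhd {u v : V} :
    u ∈ closedNbhd G v ↔ u = v ∨ G.Adj v u := by
  simp [closedNbhd]

theorem mem_closedNbhd_of_adj {u v : V} (h : G.Adj v u) :
    u ∈ closedNbhd G v :=
  mem_closedNbhd.2 (Or.inr h)

theorem self_mem_closedNbhd (v : V) : v ∈ closedNbhd G v :=
  mem_closedNbhd.2 (Or.inl rfl)

theorem mem_nbhdSet {T : Set V} {x : V} :
    x ∈ nbhdSet G T ↔ ∃ u ∈ T, G.Adj u x := by
  simp [nbhdSet]

theorem IsSimplicial.adj {x u v : V} (hx : IsSimplicial G x)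
    (hu : G.Adj x u) (hv : G.Adj x v) (huv : u ≠ v) : G.Adj u v :=
  hx u (mem_closedNbhd_of_adj hu) v (mem_closedNbhd_of_adj hv) huv

theorem notMem_monoHull {A K : Set V} {v : V} (hK : MonoConvex G K)
    (hAK : A ⊆ K) (hvK : v ∉ K) : v ∉ monoHull G A :=
  fun hv => hvK (Set.mem_sInter.1 hv K ⟨hAK, hK⟩)

theorem ncard_le_monoRank [Finite V] {S : Set V} (hS : MConvexIndep G S) :
    S.ncard ≤ monoRank G :=
  le_csSup ⟨Nat.card V, by rintro n ⟨S', -, rfl⟩; exact Set.ncard_le_card S'⟩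
    ⟨S, hS, rfl⟩

theorem SimpleGraph.Walk.mem_support_cases {a b w : V} {p : G.Walk a b}
    (hw : w ∈ p.support) :
    w = a ∨ w = b ∨ ∃ k, 0 < k ∧ k < p.length ∧ p.getVert k = w := by
  obtain ⟨k, rfl, hk⟩ := SimpleGraph.Walk.mem_support_iff_exists_getVert.1 hw
  rcases Nat.eq_zero_or_pos k with rfl | hk0
  · exact Or.inl p.getVert_zero
  rcases hk.eq_or_lt with rfl | hkL
  · exact Or.inr (Or.inl p.getVert_length)
  exact Or.inr (Or.inr ⟨k, hk0, hkL, rfl⟩)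

end Basic

namespace IsInducedPath

variable {G : SimpleGraph V} {a b : V} {p : G.Walk a b}

theorem not_adj_getVert (hp : IsInducedPath G p) {k l : ℕ} (hkl : k + 1 < l)
    (hl : l ≤ p.length) : ¬ G.Adj (p.getVert k) (p.getVert l) := by
  have h := hp.2 k l (by simp; omega) (by simp; omega) hkl
  simpa only [List.get_eq_getElem, SimpleGraph.Walk.support_getElem_eq_getVert] using h

theorem getVert_ne (hp : IsInducedPath G p) {k l : ℕ} (hkl : k ≠ l) (hk : k ≤ p.length)
    (hl : l ≤ p.length) : p.getVert k ≠ p.getVert l :=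
  fun h => hkl (hp.1.getVert_injOn hk hl h)

theorem not_isSimplicial_getVert (hp : IsInducedPath G p) {k : ℕ} (hk0 : 0 < k)
    (hk : k < p.length) : ¬ IsSimplicial G (p.getVert k) := by
  obtain ⟨j, rfl⟩ : ∃ j, k = j + 1 := ⟨k - 1, by omega⟩
  intro hs
  refine hp.not_adj_getVert (k := j) (l := j + 2) (by omega) (by omega) (hs.adj ?_ ?_ ?_)
  · exact (p.adj_getVert_succ (by omega)).symm
  · exact p.adj_getVert_succ hk
  · exact hp.getVert_ne (by omega) (by omega) (by omega)

end IsInducedPath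

theorem monoConvex_union_setOf_not_isSimplicial (G : SimpleGraph V) (Q : Set V) :
    MonoConvex G (Q ∪ {u | ¬ IsSimplicial G u}) := by
  intro a b ha hb p hp w hw
  obtain rfl | rfl | ⟨k, hk0, hk, rfl⟩ := p.mem_support_cases hw
  exacts [ha, hb, Or.inr (hp.not_isSimplicial_getVert hk0 hk)]

theorem mem_Yset_iff {G : SimpleGraph V} {t : ℕ} {Vp : Fin (t+1) → Set V} {i : Fin (t+1)}
    {w : V} : w ∈ Yset G Vp i ↔
      ∃ m, (m ≠ i ∧ Cset' G Vp m ⊆ Cset' G Vp i) ∧ w ∈ Cset G Vp m := by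
  simp [Yset]

theorem Yset_subset_simplicialSet (G : SimpleGraph V) {t : ℕ} (Vp : Fin (t+1) → Set V)
    (i : Fin (t+1)) : Yset G Vp i ⊆ simplicialSet G := by
  intro w hw
  obtain ⟨m, -, hwm⟩ := mem_Yset_iff.1 hw
  exact hwm.2

theorem Xset_zero {G : SimpleGraph V} {t : ℕ} {Vp : Fin (t+1) → Set V} :
    Xset G Vp 0 = Vp 0 := if_pos rfl

theorem Vp_subset_Xset {G : SimpleGraph V} {t : ℕ} {Vp : Fin (t+1) → Set V} (m : Fin (t+1)) :
    Vp m ⊆ Xset G Vp m := by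
  intro u hu
  by_cases h0 : m = 0
  · subst h0; rwa [Xset_zero]
  simp only [Xset, if_neg h0, Set.mem_iUnion]
  exact ⟨u, hu, self_mem_closedNbhd u⟩

namespace IsStarlikePartition

variable {G : SimpleGraph V} {t : ℕ} {Vp : Fin (t+1) → Set V}

theorem isClique_closedNbhd (hS : IsStarlikePartition G t Vp) {m : Fin (t+1)} (hm : m ≠ 0)
    {u : V} (hu : u ∈ Vp m) : G.IsClique (closedNbhd G u) := by
  have adj_of_mem : ∀ x y, x ∈ Vp m → y ∈ closedNbhd G u → x ≠ y → G.Adj x y := by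
    intro x y hx hy hxy
    by_cases hym : y ∈ Vp m
    · exact hS.cliques m hx hym hxy
    have hy' : y ∈ closedNbhd G u \ Vp m := ⟨hy, hym⟩
    rw [hS.nbhd_eq m hm u hu x hx] at hy'
    exact (mem_closedNbhd.1 hy'.1).resolve_left (Ne.symm hxy)
  intro x hx y hy hxy
  by_cases hxm : x ∈ Vp m
  · exact adj_of_mem x y hxm hy hxy
  by_cases hym : y ∈ Vp m
  · exact (adj_of_mem y x hym hx (Ne.symm hxy)).symm
  exact hS.cliques 0 (hS.nbhd_sub m hm u hu ⟨hx, hxm⟩) (hS.nbhd_sub m hm u hu ⟨hy, hym⟩) hxy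

theorem mem_V0_of_not_isSimplicial (hS : IsStarlikePartition G t Vp) {w : V}
    (hw : ¬ IsSimplicial G w) : w ∈ Vp 0 := by
  obtain ⟨m, hm⟩ := hS.covers w
  by_cases h0 : m = 0
  · exact h0 ▸ hm
  exact absurd (isSimplicial_iff_isClique.2 (hS.isClique_closedNbhd h0 hm)) hw

theorem Xset_eq_closedNbhd (hS : IsStarlikePartition G t Vp) {m : Fin (t+1)} (hm : m ≠ 0)
    {u₀ : V} (hu₀ : u₀ ∈ Vp m) : Xset G Vp m = closedNbhd G u₀ := by
  ext w
  simp only [Xset, if_neg hm, Set.mem_iUnion]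
  refine ⟨fun ⟨u, hu, hw⟩ => ?_, fun h => ⟨u₀, hu₀, h⟩⟩
  by_cases hwm : w ∈ Vp m
  · rcases eq_or_ne w u₀ with rfl | hwu
    · exact self_mem_closedNbhd w
    · exact mem_closedNbhd_of_adj (hS.cliques m hu₀ hwm (Ne.symm hwu))
  have hw' : w ∈ closedNbhd G u \ Vp m := ⟨hw, hwm⟩
  rw [hS.nbhd_eq m hm u hu u₀ hu₀] at hw'
  exact hw'.1

theorem Xset_subset (hS : IsStarlikePartition G t Vp) (m : Fin (t+1)) :
    Xset G Vp m ⊆ Vp m ∪ Vp 0 := by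
  intro w hw
  by_cases h0 : m = 0
  · subst h0; rw [Xset_zero] at hw; exact Or.inl hw
  obtain ⟨u, hu⟩ := hS.nonempty m
  rw [hS.Xset_eq_closedNbhd h0 hu] at hw
  by_cases hwm : w ∈ Vp m
  · exact Or.inl hwm
  exact Or.inr (hS.nbhd_sub m h0 u hu ⟨hw, hwm⟩)

theorem Xset_isClique (hS : IsStarlikePartition G t Vp) (m : Fin (t+1)) :
    G.IsClique (Xset G Vp m) := by
  by_cases h0 : m = 0
  · subst h0; rw [Xset_zero]; exact hS.cliques 0
  obtain ⟨u, hu⟩ := hS.nonempty m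
  rw [hS.Xset_eq_closedNbhd h0 hu]
  exact hS.isClique_closedNbhd h0 hu

theorem subset_Xset_of_isClique (hS : IsStarlikePartition G t Vp) (m : Fin (t+1)) {Q : Set V}
    (hQ : G.IsClique Q) (hXQ : Xset G Vp m ⊆ Q) : Q ⊆ Xset G Vp m := by
  by_cases h0 : m = 0
  · subst h0
    rw [Xset_zero] at hXQ ⊢
    exact hS.maximal Q hQ hXQ
  obtain ⟨u, hu⟩ := hS.nonempty m
  rw [hS.Xset_eq_closedNbhd h0 hu] at hXQ ⊢
  intro q hq
  rcases eq_or_ne q u with rfl | hqu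
  · exact self_mem_closedNbhd q
  · exact mem_closedNbhd_of_adj (hQ (hXQ (self_mem_closedNbhd u)) hq (Ne.symm hqu))

theorem closedNbhd_eq_Xset (hS : IsStarlikePartition G t Vp) {m : Fin (t+1)} {a : V}
    (ha : a ∈ Cset G Vp m) : closedNbhd G a = Xset G Vp m := by
  have hXN : Xset G Vp m ⊆ closedNbhd G a := by
    intro w hw
    rcases eq_or_ne w a with rfl | hwa
    · exact self_mem_closedNbhd w
    · exact mem_closedNbhd_of_adj (hS.Xset_isClique m ha.1 hw (Ne.symm hwa))
  exact (hS.subset_Xset_of_isClique m (isSimplicial_iff_isClique.1 ha.2) hXN).antisymm hXN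

theorem Cset'_subset_V0 (hS : IsStarlikePartition G t Vp) (m : Fin (t+1)) :
    Cset' G Vp m ⊆ Vp 0 :=
  fun _ hw => hS.mem_V0_of_not_isSimplicial fun hs => hw.2 ⟨hw.1, hs⟩

theorem mem_Cset'_of_adj (hS : IsStarlikePartition G t Vp) {m : Fin (t+1)} {a x : V}
    (ha : a ∈ Cset G Vp m) (hax : G.Adj a x) (hx : ¬ IsSimplicial G x) :
    x ∈ Cset' G Vp m :=
  ⟨hS.closedNbhd_eq_Xset ha ▸ mem_closedNbhd_of_adj hax, fun hc => hx hc.2⟩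

theorem Xset_injective (hS : IsStarlikePartition G t Vp) : Function.Injective (Xset G Vp) := by
  have eq_of_ne_zero : ∀ i j, j ≠ 0 → Xset G Vp i = Xset G Vp j → j = i := by
    intro i j hj hij
    obtain ⟨u, hu⟩ := hS.nonempty j
    by_contra hji
    rcases hS.Xset_subset i (hij ▸ Vp_subset_Xset j hu) with hui | hu0
    · exact Set.disjoint_left.1 (hS.disjoint j i hji) hu hui
    · exact Set.disjoint_left.1 (hS.disjoint j 0 hj) hu hu0
  intro i j hij
  by_cases hj : j = 0
  · by_cases hi : i = 0
    · rw [hi, hj]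
    · exact eq_of_ne_zero j i hi hij.symm
  · exact (eq_of_ne_zero i j hj hij).symm

theorem disjoint_Cset_Yset (hS : IsStarlikePartition G t Vp) (i : Fin (t+1)) :
    Disjoint (Cset G Vp i) (Yset G Vp i) := by
  rw [Set.disjoint_left]
  intro w hwi hwY
  obtain ⟨m, ⟨hmi, -⟩, hwm⟩ := mem_Yset_iff.1 hwY
  exact hmi (hS.Xset_injective ((hS.closedNbhd_eq_Xset hwm).symm.trans
    (hS.closedNbhd_eq_Xset hwi)))

theorem length_le_three (hS : IsStarlikePartition G t Vp) {a b : V} {p : G.Walk a b}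
    (hp : IsInducedPath G p) : p.length ≤ 3 := by
  by_contra! h
  have h1 := hS.mem_V0_of_not_isSimplicial
    (hp.not_isSimplicial_getVert (k := 1) (by omega) (by omega))
  have h3 := hS.mem_V0_of_not_isSimplicial (hp.not_isSimplicial_getVert (k := 3) (by omega) h)
  exact hp.not_adj_getVert (by omega) (by omega)
    (hS.cliques 0 h1 h3 (hp.getVert_ne (by omega) (by omega) (by omega)))

theorem exists_isSimplicial_end_adj (hS : IsStarlikePartition G t Vp) {a b : V}
    {p : G.Walk a b} (hp : IsInducedPath G p) {k : ℕ} (hk0 : 0 < k) (hk : k < p.length) :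
    ∃ l, (l = 0 ∨ l = p.length) ∧ IsSimplicial G (p.getVert l) ∧
      G.Adj (p.getVert l) (p.getVert k) := by
  have hL := hS.length_le_three hp
  have interior_V0 : ∀ l, 0 < l → l < p.length → p.getVert l ∈ Vp 0 :=
    fun l hl0 hl => hS.mem_V0_of_not_isSimplicial (hp.not_isSimplicial_getVert hl0 hl)
  have not_both_V0 : ∀ l₁ l₂, l₁ + 1 < l₂ → l₂ ≤ p.length →
      p.getVert l₁ ∈ Vp 0 → p.getVert l₂ ∈ Vp 0 → False := fun _ _ h h₂ h₁0 h₂0 =>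
    hp.not_adj_getVert h h₂ (hS.cliques 0 h₁0 h₂0 (hp.getVert_ne (by omega) (by omega) h₂))
  have start_simplicial : p.length = 3 → IsSimplicial G (p.getVert 0) := fun h3 => by
    by_contra h
    exact not_both_V0 0 2 (by omega) (by omega) (hS.mem_V0_of_not_isSimplicial h)
      (interior_V0 2 (by omega) (by omega))
  by_cases hb : IsSimplicial G (p.getVert p.length)
  · by_cases hkL : k + 1 = p.length
    · have h := (p.adj_getVert_succ hk).symm
      rw [hkL] at h
      exact ⟨p.length, Or.inr rfl, hb, h⟩
    obtain rfl : k = 1 := by omega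
    exact ⟨0, Or.inl rfl, start_simplicial (by omega), p.adj_getVert_succ (by omega)⟩
  · have hL2 : p.length = 2 := by
      by_contra h
      exact not_both_V0 1 p.length (by omega) le_rfl (interior_V0 1 (by omega) (by omega))
        (hS.mem_V0_of_not_isSimplicial hb)
    have ha : IsSimplicial G (p.getVert 0) := by
      by_contra ha
      exact not_both_V0 0 p.length (by omega) le_rfl (hS.mem_V0_of_not_isSimplicial ha)
        (hS.mem_V0_of_not_isSimplicial hb)
    obtain rfl : k = 1 := by omega
    exact ⟨0, Or.inl rfl, ha, p.adj_getVert_succ (by omega)⟩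

theorem monoConvex_union_Xset_diff (hS : IsStarlikePartition G t Vp) {i : Fin (t+1)}
    {T : Set V} (hTY : T ⊆ Yset G Vp i) {v : V} (hvT : v ∉ nbhdSet G T) :
    MonoConvex G (T ∪ (Xset G Vp i \ {v})) := by
  intro a b ha hb p hp w hw
  have simplicial_mem : ∀ e ∈ T ∪ (Xset G Vp i \ {v}), IsSimplicial G e →
      ∃ m, e ∈ Cset G Vp m ∧ Cset' G Vp m ⊆ Cset' G Vp i := by
    rintro e (he | ⟨he, -⟩) hes
    · obtain ⟨m, ⟨-, hm⟩, hem⟩ := mem_Yset_iff.1 (hTY he)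
      exact ⟨m, hem, hm⟩
    · exact ⟨i, ⟨he, hes⟩, subset_rfl⟩
  have interior_mem : ∀ k, 0 < k → k < p.length → p.getVert k ∈ Cset' G Vp i := by
    intro k hk0 hk
    obtain ⟨l, hl, hls, hadj⟩ := hS.exists_isSimplicial_end_adj hp hk0 hk
    have hlK : p.getVert l ∈ T ∪ (Xset G Vp i \ {v}) := by
      rcases hl with rfl | rfl
      · rwa [p.getVert_zero]
      · rwa [p.getVert_length]
    obtain ⟨m, hm, hmi⟩ := simplicial_mem _ hlK hls
    exact hmi (hS.mem_Cset'_of_adj hm hadj (hp.not_isSimplicial_getVert hk0 hk))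
  obtain rfl | rfl | ⟨k, hk0, hk, rfl⟩ := p.mem_support_cases hw
  · exact ha
  · exact hb
  refine Or.inr ⟨(interior_mem k hk0 hk).1, fun hkv => ?_⟩
  rw [Set.mem_singleton_iff] at hkv
  have nbr_mem : ∀ u ∈ p.support, G.Adj u v → u ∈ Xset G Vp i := by
    intro u hu huv
    obtain rfl | rfl | ⟨l, hl0, hl, rfl⟩ := p.mem_support_cases hu
    · rcases ha with haT | haX
      exacts [absurd (mem_nbhdSet.2 ⟨u, haT, huv⟩) hvT, haX.1]
    · rcases hb with hbT | hbX
      exacts [absurd (mem_nbhdSet.2 ⟨u, hbT, huv⟩) hvT, hbX.1]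
    · exact (interior_mem l hl0 hl).1
  obtain ⟨j, rfl⟩ : ∃ j, k = j + 1 := ⟨k - 1, by omega⟩
  have hprev : G.Adj (p.getVert j) v := hkv ▸ p.adj_getVert_succ (by omega)
  have hnext : G.Adj (p.getVert (j + 2)) v := hkv ▸ (p.adj_getVert_succ hk).symm
  exact hp.not_adj_getVert (by omega) (by omega) (hS.Xset_isClique i
    (nbr_mem _ (p.getVert_mem_support j) hprev) (nbr_mem _ (p.getVert_mem_support _) hnext)
    (hp.getVert_ne (by omega) (by omega) (by omega)))

theorem mConvexIndep_of_subset_Yset (hS : IsStarlikePartition G t Vp) {i : Fin (t+1)}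
    {T : Set V} (hTY : T ⊆ Yset G Vp i) :
    MConvexIndep G ((Cset' G Vp i \ nbhdSet G T) ∪ T ∪ Cset G Vp i) := by
  have hT : ∀ x ∈ T, IsSimplicial G x := fun x hx => Yset_subset_simplicialSet G Vp i (hTY hx)
  intro v hv
  by_cases hvs : IsSimplicial G v
  · refine notMem_monoHull (monoConvex_union_setOf_not_isSimplicial G _)
      Set.subset_union_left ?_
    rintro (⟨-, h⟩ | h)
    exacts [h rfl, h hvs]
  have hvN : v ∉ nbhdSet G T := by
    rcases hv with (h | h) | h
    exacts [h.2, absurd (hT v h) hvs, absurd h.2 hvs]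
  refine notMem_monoHull (hS.monoConvex_union_Xset_diff hTY hvN) ?_ ?_
  · rintro u ⟨(⟨hu, -⟩ | hu) | hu, hne⟩
    exacts [Or.inr ⟨hu.1, hne⟩, Or.inl hu, Or.inr ⟨hu.1, hne⟩]
  · rintro (h | ⟨-, h⟩)
    exacts [hvs (hT v h), h rfl]

end IsStarlikePartition

section SplitGraph

variable {G : SimpleGraph V} {t : ℕ} {Vp : Fin (t+1) → Set V} {i : Fin (t+1)}

theorem Wset_diff_Yset_subset : Wset G Vp i \ Yset G Vp i ⊆ Cset' G Vp i := by
  rintro w ⟨hw, hwY⟩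
  unfold Wset at hw
  split_ifs at hw
  · exact (hw.resolve_right hwY).1
  · exact hw.resolve_right hwY

theorem mem_Wset_of_mem_nbhdSet {w : V} (hw : w ∈ Cset' G Vp i)
    (hwN : w ∈ nbhdSet G (Yset G Vp i)) : w ∈ Wset G Vp i := by
  unfold Wset
  split_ifs
  · exact Or.inl ⟨hw, hwN⟩
  · exact Or.inl hw

theorem image_val_nbhdSet_Gsplit {T : Set (Wset G Vp i)} (hTY : Subtype.val '' T ⊆ Yset G Vp i) :
    Subtype.val '' nbhdSet (Gsplit G Vp i) T = Cset' G Vp i ∩ nbhdSet G (Subtype.val '' T) := by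
  ext w
  constructor
  · rintro ⟨u, hu, rfl⟩
    obtain ⟨s, hsT, hsu, hY⟩ := mem_nbhdSet.1 hu
    have huY : (u : V) ∉ Yset G Vp i := fun h => hY ⟨hTY ⟨s, hsT, rfl⟩, h⟩
    exact ⟨Wset_diff_Yset_subset ⟨u.2, huY⟩, mem_nbhdSet.2 ⟨s, ⟨s, hsT, rfl⟩, hsu⟩⟩
  · rintro ⟨hwC', hwN⟩
    obtain ⟨_, ⟨s, hsT, rfl⟩, hsw⟩ := mem_nbhdSet.1 hwN
    have hsY : (s : V) ∈ Yset G Vp i := hTY ⟨s, hsT, rfl⟩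
    have hwY : w ∉ Yset G Vp i := fun h =>
      hwC'.2 ⟨hwC'.1, Yset_subset_simplicialSet G Vp i h⟩
    refine ⟨⟨w, mem_Wset_of_mem_nbhdSet hwC' (mem_nbhdSet.2 ⟨s, hsY, hsw⟩)⟩, ?_, rfl⟩
    exact mem_nbhdSet.2 ⟨s, hsT, hsw, fun h => hwY h.2⟩

theorem IsStarlikePartition.ncard_eq_ncard_Xset_add_indepDiff [Finite V]
    (hS : IsStarlikePartition G t Vp) {T : Set (Wset G Vp i)}
    (hTY : Subtype.val '' T ⊆ Yset G Vp i) :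
    (((Cset' G Vp i \ nbhdSet G (Subtype.val '' T)) ∪ Subtype.val '' T ∪
        Cset G Vp i).ncard : ℤ) = (Xset G Vp i).ncard + indepDiff (Gsplit G Vp i) T := by
  set Tv := Subtype.val '' T
  have hC'T : Disjoint (Cset' G Vp i \ nbhdSet G Tv) Tv := Set.disjoint_left.2 fun x hx hxT =>
    hx.1.2 ⟨hx.1.1, Yset_subset_simplicialSet G Vp i (hTY hxT)⟩
  have hC : Disjoint ((Cset' G Vp i \ nbhdSet G Tv) ∪ Tv) (Cset G Vp i) := by
    refine Set.disjoint_left.2 ?_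
    rintro x (hx | hx) hxC
    exacts [hx.1.2 hxC, Set.disjoint_left.1 (hS.disjoint_Cset_Yset i) hxC (hTY hx)]
  have hTv : Tv.ncard = T.ncard := Set.ncard_image_of_injective T Subtype.val_injective
  have hN : (nbhdSet (Gsplit G Vp i) T).ncard = (Cset' G Vp i ∩ nbhdSet G Tv).ncard := by
    rw [← image_val_nbhdSet_Gsplit hTY, Set.ncard_image_of_injective _ Subtype.val_injective]
  have hC' := Set.ncard_inter_add_ncard_sdiff_eq_ncard (Cset' G Vp i) (nbhdSet G Tv)
  have hX : (Cset' G Vp i).ncard + (Cset G Vp i).ncard = (Xset G Vp i).ncard :=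
    Set.ncard_sdiff_add_ncard_of_subset Set.inter_subset_left
  rw [Set.ncard_union_eq hC, Set.ncard_union_eq hC'T, indepDiff]
  omega

end SplitGraph

theorem statement4_general [Fintype V] (G : SimpleGraph V) (t : ℕ) (Vp : Fin (t+1) → Set V)
    (hstar : IsStarlikePartition G t Vp) (i : Fin (t+1))
    (T : Set ↥(Wset G Vp i))
    (hTcrit : indepDiff (Gsplit G Vp i) T = critIndepDiff (Gsplit G Vp i))
    (hTY : Subtype.val '' T ⊆ Yset G Vp i) :
    MConvexIndep G
      ((Cset' G Vp i \ nbhdSet G (Subtype.val '' T)) ∪ Subtype.val '' T ∪ Cset G Vp i) ∧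
    ((((Cset' G Vp i \ nbhdSet G (Subtype.val '' T)) ∪ Subtype.val '' T ∪
        Cset G Vp i).ncard : ℤ)
      = ((Xset G Vp i).ncard : ℤ) + critIndepDiff (Gsplit G Vp i)) ∧
    ((Xset G Vp i).ncard : ℤ) + critIndepDiff (Gsplit G Vp i) ≤ (monoRank G : ℤ) := by
  have hindep := hstar.mConvexIndep_of_subset_Yset hTY
  have hcard := hstar.ncard_eq_ncard_Xset_add_indepDiff hTY
  rw [hTcrit] at hcard
  exact ⟨hindep, hcard, hcard ▸ Int.ofNat_le.2 (ncard_le_monoRank hindep)⟩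

/-- if `T_i` is a critical independent set of `G_i` contained in `Y_i`,
then `S_i = (C'_i − N(T_i)) ∪ T_i ∪ C_i` is m-convexly independent,
`|S_i| = |X_i| + d_c(G_i)`, and hence `r(G) ≥ |X_i| + d_c(G_i)`. -/
theorem statement4 [Fintype V] (G : SimpleGraph V) (t : ℕ) (Vp : Fin (t+1) → Set V)
    (hstar : IsStarlikePartition G t Vp) (i : Fin (t+1))
    (T : Set ↥(Wset G Vp i))
    (hTindep : IsIndepSet' (Gsplit G Vp i) T)
    (hTcrit : indepDiff (Gsplit G Vp i) T = critIndepDiff (Gsplit G Vp i))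
    (hTY : Subtype.val '' T ⊆ Yset G Vp i) :
    MConvexIndep G
      ((Cset' G Vp i \ nbhdSet G (Subtype.val '' T)) ∪ Subtype.val '' T ∪ Cset G Vp i) ∧
    ((((Cset' G Vp i \ nbhdSet G (Subtype.val '' T)) ∪ Subtype.val '' T ∪
        Cset G Vp i).ncard : ℤ)
      = ((Xset G Vp i).ncard : ℤ) + critIndepDiff (Gsplit G Vp i)) ∧
    ((Xset G Vp i).ncard : ℤ) + critIndepDiff (Gsplit G Vp i) ≤ (monoRank G : ℤ) :=
  statement4_general G t Vp hstar i T hTcrit hTY
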